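/- Define h : [0, ∞) → ℝ by h(t) = t² for 0 ≤ t ≤ 1 and h(t) = 2t − 1 for t ≥ 1, and let r = min{|𝒮|, |𝒴|} − 1. For every pair of jointly distributed random variables (Y, S) taking values in finite sets 𝒴, 𝒮: r · ρ_m(Y, S) ≥ h( 2 · E_{s∼P_S}[ TV(P_{Y|S=s}, P_Y) ] ), where ρ_m(Y, S) is the Hirschfeld–Gebelein–Rényi maximal correlation of Y and S. -/

import Mathlib

/-!
Let `B(y,s) = (P(y,s) - P_Y(y) P_S(s)) / √(P_Y(y) P_S(s))`, so that
`∑ B² = χ²(P_{Y,S}, P_Y × P_S)`. Cauchy–Schwarz with the weights `P_Y(y) P_S(s)` gives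
`(2 E[TV])² ≤ χ²`, and `h(t) ≤ t²`. For `f = u / √P_Y` and `g = w / √P_S` the bilinear form
`uᵀ B w` is the covariance of `f(Y)` and `g(S)`, whose square is at most
`ρ_m² Var f(Y) Var g(S) ≤ ρ_m² |u|² |w|²`. Hence every eigenvalue of `B Bᵀ` is at most `ρ_m²`,
and `χ² = tr(B Bᵀ) ≤ rank(B) ρ_m²`. Finally `B √P_S = 0` and `√P_Yᵀ B = 0` give `rank B ≤ r`,
while `ρ_m ≤ 1` gives `ρ_m² ≤ ρ_m`.
-/

open Finset

noncomputable section

variable {𝒴 𝒮 : Type*} [Fintype 𝒴] [Fintype 𝒮]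

/-- Total variation distance between two finitely supported distributions on `𝒴`,
`TV(p, q) = (1/2) ∑ y, |p y - q y|`. -/
def TV (p q : 𝒴 → ℝ) : ℝ := (1 / 2) * ∑ y, |p y - q y|

/-- Marginal distribution of `Y` under the joint `P` of `(Y, S)`. -/
def margY (P : 𝒴 → 𝒮 → ℝ) (y : 𝒴) : ℝ := ∑ s, P y s

/-- Marginal distribution of `S`. -/
def margS (P : 𝒴 → 𝒮 → ℝ) (s : 𝒮) : ℝ := ∑ y, P y s

/-- Conditional distribution of `Y` given `S = s`. -/
def condYS (P : 𝒴 → 𝒮 → ℝ) (s : 𝒮) (y : 𝒴) : ℝ := P y s / margS P s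

/-- The function `h(t) = t²` for `t ≤ 1` and `h(t) = 2t - 1` for `t ≥ 1`. -/
def hfun (t : ℝ) : ℝ := if t ≤ 1 then t ^ 2 else 2 * t - 1

/-- Hirschfeld–Gebelein–Rényi maximal correlation of a joint distribution `P` of `(Y, S)`:
the supremum of `E[f(Y) g(S)]` over `f, g` with zero mean and unit second moment. -/
def maxCorr (P : 𝒴 → 𝒮 → ℝ) : ℝ :=
  sSup { c : ℝ | ∃ f : 𝒴 → ℝ, ∃ g : 𝒮 → ℝ,
    (∑ y, margY P y * f y = 0) ∧ (∑ s, margS P s * g s = 0) ∧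
    (∑ y, margY P y * f y ^ 2 = 1) ∧ (∑ s, margS P s * g s ^ 2 = 1) ∧
    c = ∑ y, ∑ s, P y s * f y * g s }

open Matrix

theorem sq_sum_sum_le_of_sq_le_mul {ι κ : Type*} [Fintype ι] [Fintype κ] {r f g : ι → κ → ℝ}
    (hf : ∀ i j, 0 ≤ f i j) (hg : ∀ i j, 0 ≤ g i j) (hr : ∀ i j, r i j ^ 2 ≤ f i j * g i j) :
    (∑ i, ∑ j, r i j) ^ 2 ≤ (∑ i, ∑ j, f i j) * ∑ i, ∑ j, g i j := by
  simpa only [Fintype.sum_prod_type'] using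
    sum_sq_le_sum_mul_sum_of_sq_le_mul (r := fun x : ι × κ => r x.1 x.2) univ
      (fun x _ => hf x.1 x.2) (fun x _ => hg x.1 x.2) (fun x _ => hr x.1 x.2)

theorem sum_mul_sub_sq_eq {ι : Type*} [Fintype ι] {μ : ι → ℝ} (hμ : ∑ i, μ i = 1) (f : ι → ℝ) :
    ∑ i, μ i * (f i - ∑ j, μ j * f j) ^ 2 = ∑ i, μ i * f i ^ 2 - (∑ i, μ i * f i) ^ 2 := by
  set a := ∑ j, μ j * f j
  have : ∀ i, μ i * (f i - a) ^ 2 = μ i * f i ^ 2 - 2 * a * (μ i * f i) + a ^ 2 * μ i :=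
    fun i => by ring
  simp only [this, sum_add_distrib, sum_sub_distrib, ← mul_sum, hμ]
  ring

theorem sum_mul_sub_eq_zero {ι : Type*} [Fintype ι] {μ : ι → ℝ} (hμ : ∑ i, μ i = 1)
    (f : ι → ℝ) : ∑ i, μ i * (f i - ∑ j, μ j * f j) = 0 := by
  simp only [mul_sub, sum_sub_distrib, ← sum_mul, hμ, one_mul, sub_self]

theorem sum_mul_div_sqrt_sq_eq_one {ι : Type*} [Fintype ι] {μ h : ι → ℝ}
    (hpos : 0 < ∑ i, μ i * h i ^ 2) : ∑ i, μ i * (h i / √(∑ j, μ j * h j ^ 2)) ^ 2 = 1 := by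
  simp only [div_pow, Real.sq_sqrt hpos.le, mul_div_assoc', ← sum_div, div_self hpos.ne']

theorem mul_div_sqrt_sq_le {q : ℝ} (hq : 0 ≤ q) (x : ℝ) : q * (x / √q) ^ 2 ≤ x ^ 2 := by
  rw [div_pow, Real.sq_sqrt hq]
  rcases hq.eq_or_lt with rfl | hq
  · simpa using sq_nonneg x
  · rw [mul_div_cancel₀ _ hq.ne']

theorem mul_div_sqrt_self (q x : ℝ) : q * (x / √q) = √q * x := by
  rw [mul_div_left_comm, Real.div_sqrt, mul_comm]

theorem sum_mul_div_sqrt_sub_sq_le {ι : Type*} [Fintype ι] {μ : ι → ℝ} (hμ0 : ∀ i, 0 ≤ μ i)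
    (hμ1 : ∑ i, μ i = 1) (x : ι → ℝ) :
    ∑ i, μ i * (x i / √(μ i) - ∑ j, μ j * (x j / √(μ j))) ^ 2 ≤ x ⬝ᵥ x := by
  rw [sum_mul_sub_sq_eq hμ1]
  calc _ ≤ ∑ i, μ i * (x i / √(μ i)) ^ 2 := sub_le_self _ (sq_nonneg _)
    _ ≤ x ⬝ᵥ x := sum_le_sum fun i _ => (mul_div_sqrt_sq_le (hμ0 i) _).trans_eq (sq _)

theorem sqrt_ne_zero_of_sum_eq_one {ι : Type*} [Fintype ι] {μ : ι → ℝ} (h : ∑ i, μ i = 1) :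
    (fun i => √(μ i)) ≠ 0 := by
  obtain ⟨i, -, hi⟩ := exists_lt_of_sum_lt (s := univ) (f := 0) (g := μ) (by simp [h])
  exact fun h0 => (Real.sqrt_pos.mpr hi).ne' (congrFun h0 i)

theorem Matrix.rank_lt_card_of_mulVec_eq_zero {m n K : Type*} [Fintype n] [Field K]
    {B : Matrix m n K} {w : n → K} (hw : w ≠ 0) (h : B *ᵥ w = 0) :
    B.rank < Fintype.card n := by
  have hker : 1 ≤ Module.finrank K (LinearMap.ker B.mulVecLin) :=
    Submodule.one_le_finrank_iff.mpr ((Submodule.ne_bot_iff _).mpr ⟨w, h, hw⟩)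
  have hsum := B.mulVecLin.finrank_range_add_finrank_ker
  rw [Module.finrank_fintype_fun_eq_card] at hsum
  rw [Matrix.rank]
  omega

theorem Matrix.IsHermitian.trace_le_rank_mul {n : Type*} [Fintype n] [DecidableEq n]
    {A : Matrix n n ℝ} (hA : A.IsHermitian) {c : ℝ}
    (h : ∀ i, hA.eigenvalues i ≤ c) : A.trace ≤ A.rank * c := by
  rw [hA.trace_eq_sum_eigenvalues, hA.rank_eq_card_non_zero_eigs, Fintype.card_subtype,
    ← sum_filter_ne_zero]
  simpa using sum_le_card_nsmul _ _ c fun i _ => h i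

theorem Matrix.eigenvalues_self_mul_conjTranspose_le {m n : Type*} [Fintype m] [Fintype n]
    [DecidableEq m] (B : Matrix m n ℝ) {c : ℝ}
    (h : ∀ u w, (u ⬝ᵥ B *ᵥ w) ^ 2 ≤ c ^ 2 * (u ⬝ᵥ u) * (w ⬝ᵥ w)) (i : m) :
    (isHermitian_mul_conjTranspose_self B).eigenvalues i ≤ c ^ 2 := by
  set hB := isHermitian_mul_conjTranspose_self B
  set u : m → ℝ := ⇑(hB.eigenvectorBasis i)
  have hu : u ⬝ᵥ u = 1 := by
    have := real_inner_self_eq_norm_sq (hB.eigenvectorBasis i)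
    rw [hB.eigenvectorBasis.orthonormal.1 i, one_pow] at this
    rwa [EuclideanSpace.inner_eq_star_dotProduct, star_trivial] at this
  have hx : hB.eigenvalues i = u ⬝ᵥ B *ᵥ (Bᴴ *ᵥ u) := by
    rw [hB.eigenvalues_eq]
    simp [u, mulVec_mulVec]
  have hx' : u ⬝ᵥ B *ᵥ (Bᴴ *ᵥ u) = (Bᴴ *ᵥ u) ⬝ᵥ (Bᴴ *ᵥ u) := by
    rw [dotProduct_mulVec, ← mulVec_transpose, conjTranspose_eq_transpose_of_trivial]
  -- `h` at `w = Bᴴ u` reads `λ² ≤ c² λ`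
  have := h u (Bᴴ *ᵥ u)
  rw [hu, ← hx', ← hx] at this
  nlinarith [eigenvalues_self_mul_conjTranspose_nonneg B i]

theorem Matrix.sum_sq_le_rank_mul {m n : Type*} [Fintype m] [Fintype n] (B : Matrix m n ℝ)
    {c : ℝ} (h : ∀ u w, (u ⬝ᵥ B *ᵥ w) ^ 2 ≤ c ^ 2 * (u ⬝ᵥ u) * (w ⬝ᵥ w)) :
    ∑ i, ∑ j, B i j ^ 2 ≤ B.rank * c ^ 2 := by
  classical
  have htrace : ∑ i, ∑ j, B i j ^ 2 = (B * Bᴴ).trace := by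
    simp [Matrix.trace, Matrix.mul_apply, sq]
  rw [htrace, ← rank_self_mul_conjTranspose]
  exact (isHermitian_mul_conjTranspose_self B).trace_le_rank_mul
    (B.eigenvalues_self_mul_conjTranspose_le h)

theorem Real.sSup_nonneg_of_neg_mem {S : Set ℝ} (hS : ∀ x ∈ S, -x ∈ S) : 0 ≤ sSup S := by
  rcases S.eq_empty_or_nonempty with rfl | ⟨x, hx⟩
  · rw [Real.sSup_empty]
  · rcases le_total 0 x with h | h
    · exact Real.sSup_nonneg' ⟨x, hx, h⟩
    · exact Real.sSup_nonneg' ⟨-x, hS x hx, neg_nonneg.mpr h⟩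

theorem hfun_le_sq (t : ℝ) : hfun t ≤ t ^ 2 := by
  unfold hfun
  split_ifs
  · rfl
  · nlinarith [sq_nonneg (t - 1)]

/-- For a probability `P` this is `(P y s - P_Y(y) P_S(s)) / √(P_Y(y) P_S(s))` (both sides vanish
when `P_Y(y) P_S(s) = 0`), written as a difference so that `P y s / √(P_Y(y) P_S(s))` splits off
without case distinctions. -/
def chiSqMatrix (P : 𝒴 → 𝒮 → ℝ) : Matrix 𝒴 𝒮 ℝ :=
  fun y s => P y s / (√(margY P y) * √(margS P s)) - √(margY P y) * √(margS P s)

variable {P : 𝒴 → 𝒮 → ℝ}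

theorem sum_margY (hP1 : ∑ y, ∑ s, P y s = 1) : ∑ y, margY P y = 1 := hP1

theorem sum_margS (hP1 : ∑ y, ∑ s, P y s = 1) : ∑ s, margS P s = 1 := by
  rw [← hP1, sum_comm]
  rfl

theorem eq_zero_of_margY_mul_margS_eq_zero (hP0 : ∀ y s, 0 ≤ P y s) {y : 𝒴} {s : 𝒮}
    (h : margY P y * margS P s = 0) : P y s = 0 := by
  rcases mul_eq_zero.mp h with h | h
  · exact (sum_eq_zero_iff_of_nonneg fun s _ => hP0 y s).mp h s (mem_univ s)
  · exact (sum_eq_zero_iff_of_nonneg fun y _ => hP0 y s).mp h y (mem_univ y)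

theorem sum_sum_mul_left (f : 𝒴 → ℝ) : ∑ y, ∑ s, P y s * f y = ∑ y, margY P y * f y := by
  simp only [margY, sum_mul]

theorem sum_sum_mul_right (g : 𝒮 → ℝ) : ∑ y, ∑ s, P y s * g s = ∑ s, margS P s * g s := by
  rw [sum_comm]
  simp only [margS, sum_mul]

theorem two_mul_sum_margS_mul_TV (hP0 : ∀ y s, 0 ≤ P y s) :
    2 * ∑ s, margS P s * TV (condYS P s) (margY P)
      = ∑ y, ∑ s, |P y s - margY P y * margS P s| := by
  rw [sum_comm, mul_sum]
  refine sum_congr rfl fun s _ => ?_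
  rw [TV, ← mul_assoc, mul_comm 2, mul_assoc, ← mul_assoc 2, mul_one_div_cancel two_ne_zero,
    one_mul, mul_sum]
  refine sum_congr rfl fun y _ => ?_
  have hs : 0 ≤ margS P s := sum_nonneg fun y _ => hP0 y s
  rcases hs.eq_or_lt with hs | hs
  · simp [← hs, eq_zero_of_margY_mul_margS_eq_zero hP0 (by rw [← hs, mul_zero])]
  · rw [← abs_of_pos hs, ← abs_mul, condYS, abs_of_pos hs, mul_sub, mul_div_cancel₀ _ hs.ne',
      mul_comm]

theorem sq_sum_sum_mul_mul_le (hP0 : ∀ y s, 0 ≤ P y s) (f : 𝒴 → ℝ) (g : 𝒮 → ℝ) :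
    (∑ y, ∑ s, P y s * f y * g s) ^ 2
      ≤ (∑ y, margY P y * f y ^ 2) * ∑ s, margS P s * g s ^ 2 := by
  rw [← sum_sum_mul_left, ← sum_sum_mul_right]
  refine sq_sum_sum_le_of_sq_le_mul (fun y s => mul_nonneg (hP0 y s) (sq_nonneg _))
    (fun y s => mul_nonneg (hP0 y s) (sq_nonneg _)) fun y s => le_of_eq ?_
  ring

theorem sum_sum_mul_mul_le_one (hP0 : ∀ y s, 0 ≤ P y s) {f : 𝒴 → ℝ} {g : 𝒮 → ℝ}
    (hf2 : ∑ y, margY P y * f y ^ 2 = 1) (hg2 : ∑ s, margS P s * g s ^ 2 = 1) :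
    ∑ y, ∑ s, P y s * f y * g s ≤ 1 := by
  have := sq_sum_sum_mul_mul_le hP0 f g
  rw [hf2, hg2, one_mul] at this
  exact (abs_le.mp ((sq_le_one_iff_abs_le_one _).mp this)).2

theorem le_maxCorr (hP0 : ∀ y s, 0 ≤ P y s) {f : 𝒴 → ℝ} {g : 𝒮 → ℝ}
    (hf : ∑ y, margY P y * f y = 0) (hg : ∑ s, margS P s * g s = 0)
    (hf2 : ∑ y, margY P y * f y ^ 2 = 1) (hg2 : ∑ s, margS P s * g s ^ 2 = 1) :
    ∑ y, ∑ s, P y s * f y * g s ≤ maxCorr P := by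
  refine le_csSup ⟨1, ?_⟩ ⟨f, g, hf, hg, hf2, hg2, rfl⟩
  rintro _ ⟨f, g, -, -, hf2, hg2, rfl⟩
  exact sum_sum_mul_mul_le_one hP0 hf2 hg2

theorem maxCorr_le_one (hP0 : ∀ y s, 0 ≤ P y s) : maxCorr P ≤ 1 := by
  refine Real.sSup_le ?_ zero_le_one
  rintro _ ⟨f, g, -, -, hf2, hg2, rfl⟩
  exact sum_sum_mul_mul_le_one hP0 hf2 hg2

theorem maxCorr_nonneg : 0 ≤ maxCorr P := by
  refine Real.sSup_nonneg_of_neg_mem ?_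
  rintro _ ⟨f, g, hf, hg, hf2, hg2, rfl⟩
  refine ⟨f, -g, hf, ?_, hf2, ?_, ?_⟩ <;> simp [hg, hg2]

theorem sum_sum_mul_mul_le_maxCorr_mul (hP0 : ∀ y s, 0 ≤ P y s) {f : 𝒴 → ℝ} {g : 𝒮 → ℝ}
    (hf : ∑ y, margY P y * f y = 0) (hg : ∑ s, margS P s * g s = 0)
    (hF : 0 < ∑ y, margY P y * f y ^ 2) (hG : 0 < ∑ s, margS P s * g s ^ 2) :
    ∑ y, ∑ s, P y s * f y * g s
      ≤ maxCorr P * √(∑ y, margY P y * f y ^ 2) * √(∑ s, margS P s * g s ^ 2) := by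
  set F := ∑ y, margY P y * f y ^ 2
  set G := ∑ s, margS P s * g s ^ 2
  have hcorr := le_maxCorr hP0 (f := fun y => f y / √F) (g := fun s => g s / √G)
    (by simp only [mul_div_assoc', ← sum_div, hf, zero_div])
    (by simp only [mul_div_assoc', ← sum_div, hg, zero_div])
    (sum_mul_div_sqrt_sq_eq_one hF) (sum_mul_div_sqrt_sq_eq_one hG)
  have hscale : ∀ y s, P y s * (f y / √F) * (g s / √G) = P y s * f y * g s / (√F * √G) :=
    fun y s => by ring
  simp only [hscale, ← sum_div] at hcorr
  rwa [div_le_iff₀ (by positivity), ← mul_assoc] at hcorr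

theorem sq_sum_sum_mul_mul_le_maxCorr_sq (hP0 : ∀ y s, 0 ≤ P y s) {f : 𝒴 → ℝ} {g : 𝒮 → ℝ}
    (hf : ∑ y, margY P y * f y = 0) (hg : ∑ s, margS P s * g s = 0) :
    (∑ y, ∑ s, P y s * f y * g s) ^ 2
      ≤ maxCorr P ^ 2 * (∑ y, margY P y * f y ^ 2) * ∑ s, margS P s * g s ^ 2 := by
  have hF : 0 ≤ ∑ y, margY P y * f y ^ 2 :=
    sum_nonneg fun y _ => mul_nonneg (sum_nonneg fun s _ => hP0 y s) (sq_nonneg _)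
  have hG : 0 ≤ ∑ s, margS P s * g s ^ 2 :=
    sum_nonneg fun s _ => mul_nonneg (sum_nonneg fun y _ => hP0 y s) (sq_nonneg _)
  rcases hF.eq_or_lt with hF | hF
  · nlinarith [sq_sum_sum_mul_mul_le hP0 f g]
  rcases hG.eq_or_lt with hG | hG
  · nlinarith [sq_sum_sum_mul_mul_le hP0 f g]
  have hle := sum_sum_mul_mul_le_maxCorr_mul hP0 hf hg hF hG
  have hge := sum_sum_mul_mul_le_maxCorr_mul hP0 (g := -g) hf
    (by simpa using hg) hF (by simpa using hG)
  simp only [Pi.neg_apply, mul_neg, sum_neg_distrib, neg_sq] at hge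
  calc _ ≤ (maxCorr P * √(∑ y, margY P y * f y ^ 2) * √(∑ s, margS P s * g s ^ 2)) ^ 2 :=
        sq_le_sq' (by linarith) hle
    _ = _ := by rw [mul_pow, mul_pow, Real.sq_sqrt hF.le, Real.sq_sqrt hG.le]

theorem sum_sum_mul_sub_mul_sub (hP1 : ∑ y, ∑ s, P y s = 1) (f : 𝒴 → ℝ) (g : 𝒮 → ℝ) :
    ∑ y, ∑ s, P y s * (f y - ∑ y', margY P y' * f y') * (g s - ∑ s', margS P s' * g s')
      = ∑ y, ∑ s, P y s * f y * g s
        - (∑ y, margY P y * f y) * ∑ s, margS P s * g s := by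
  set a := ∑ y', margY P y' * f y'
  set b := ∑ s', margS P s' * g s'
  have hexp : ∀ y s, P y s * (f y - a) * (g s - b)
      = P y s * f y * g s - b * (P y s * f y) - a * (P y s * g s) + a * b * P y s :=
    fun y s => by ring
  simp only [hexp, sum_add_distrib, sum_sub_distrib, ← mul_sum, sum_sum_mul_left,
    sum_sum_mul_right, hP1]
  ring

theorem dotProduct_chiSqMatrix_mulVec (u : 𝒴 → ℝ) (w : 𝒮 → ℝ) :
    u ⬝ᵥ chiSqMatrix P *ᵥ w
      = ∑ y, ∑ s, P y s * (u y / √(margY P y)) * (w s / √(margS P s))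
        - (∑ y, margY P y * (u y / √(margY P y))) * ∑ s, margS P s * (w s / √(margS P s)) := by
  have hentry : ∀ y s, u y * (chiSqMatrix P y s * w s)
      = P y s * (u y / √(margY P y)) * (w s / √(margS P s))
        - (√(margY P y) * u y) * (√(margS P s) * w s) :=
    fun y s => by simp only [chiSqMatrix]; ring
  simp only [mul_div_sqrt_self]
  rw [sum_mul_sum]
  simp only [dotProduct, mulVec, mul_sum, hentry, sum_sub_distrib]

theorem sq_dotProduct_chiSqMatrix_mulVec_le (hP0 : ∀ y s, 0 ≤ P y s)
    (hP1 : ∑ y, ∑ s, P y s = 1) (u : 𝒴 → ℝ) (w : 𝒮 → ℝ) :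
    (u ⬝ᵥ chiSqMatrix P *ᵥ w) ^ 2 ≤ maxCorr P ^ 2 * (u ⬝ᵥ u) * (w ⬝ᵥ w) := by
  have hq0 : ∀ y, 0 ≤ margY P y := fun y => sum_nonneg fun s _ => hP0 y s
  have hp0 : ∀ s, 0 ≤ margS P s := fun s => sum_nonneg fun y _ => hP0 y s
  set f := fun y => u y / √(margY P y)
  set g := fun s => w s / √(margS P s)
  rw [dotProduct_chiSqMatrix_mulVec, ← sum_sum_mul_sub_mul_sub hP1]
  calc _ ≤ maxCorr P ^ 2 * (∑ y, margY P y * (f y - ∑ y', margY P y' * f y') ^ 2)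
        * ∑ s, margS P s * (g s - ∑ s', margS P s' * g s') ^ 2 :=
        sq_sum_sum_mul_mul_le_maxCorr_sq hP0 (sum_mul_sub_eq_zero (sum_margY hP1) f)
          (sum_mul_sub_eq_zero (sum_margS hP1) g)
    _ ≤ maxCorr P ^ 2 * (u ⬝ᵥ u) * (w ⬝ᵥ w) := by
        gcongr
        · exact sum_nonneg fun s _ => mul_nonneg (hp0 s) (sq_nonneg _)
        · exact mul_nonneg (sq_nonneg _) (sum_nonneg fun y _ => mul_self_nonneg (u y))
        · exact sum_mul_div_sqrt_sub_sq_le hq0 (sum_margY hP1) u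
        · exact sum_mul_div_sqrt_sub_sq_le hp0 (sum_margS hP1) w

theorem sq_abs_sub_le_mul_chiSqMatrix_sq (hP0 : ∀ y s, 0 ≤ P y s) (y : 𝒴) (s : 𝒮) :
    |P y s - margY P y * margS P s| ^ 2
      ≤ margY P y * margS P s * chiSqMatrix P y s ^ 2 := by
  have hq : 0 ≤ margY P y := sum_nonneg fun s _ => hP0 y s
  have hp : 0 ≤ margS P s := sum_nonneg fun y _ => hP0 y s
  set a := √(margY P y) * √(margS P s)
  have ha : a ^ 2 = margY P y * margS P s := by rw [mul_pow, Real.sq_sqrt hq, Real.sq_sqrt hp]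
  rw [sq_abs, ← ha, show chiSqMatrix P y s = P y s / a - a from rfl]
  rcases eq_or_ne a 0 with h | h
  · simp [h, eq_zero_of_margY_mul_margS_eq_zero hP0 (by rw [← ha, h]; ring)]
  · refine le_of_eq ?_
    field_simp

theorem sq_sum_sum_abs_sub_le_sum_sum_chiSqMatrix_sq (hP0 : ∀ y s, 0 ≤ P y s)
    (hP1 : ∑ y, ∑ s, P y s = 1) :
    (∑ y, ∑ s, |P y s - margY P y * margS P s|) ^ 2 ≤ ∑ y, ∑ s, chiSqMatrix P y s ^ 2 := by
  have := sq_sum_sum_le_of_sq_le_mul (f := fun y s => margY P y * margS P s)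
    (fun y s => mul_nonneg (sum_nonneg fun s _ => hP0 y s) (sum_nonneg fun y _ => hP0 y s))
    (fun y s => sq_nonneg (chiSqMatrix P y s)) (sq_abs_sub_le_mul_chiSqMatrix_sq hP0)
  rwa [← sum_mul_sum, sum_margY hP1, sum_margS hP1, one_mul, one_mul] at this

theorem chiSqMatrix_mulVec_sqrt_margS (hP0 : ∀ y s, 0 ≤ P y s) (hP1 : ∑ y, ∑ s, P y s = 1) :
    chiSqMatrix P *ᵥ (fun s => √(margS P s)) = 0 := by
  funext y
  have hentry : ∀ s, chiSqMatrix P y s * √(margS P s)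
      = P y s / √(margY P y) - √(margY P y) * margS P s := by
    intro s
    rcases eq_or_ne (margS P s) 0 with hp | hp
    · simp [chiSqMatrix, hp, eq_zero_of_margY_mul_margS_eq_zero hP0 (by rw [hp, mul_zero])]
    · have hp' : 0 < margS P s := (sum_nonneg fun y _ => hP0 y s).lt_of_ne' hp
      rw [chiSqMatrix, sub_mul, div_mul_eq_mul_div,
        mul_div_mul_right _ _ (Real.sqrt_pos.mpr hp').ne', mul_assoc,
        Real.mul_self_sqrt hp'.le]
  simp only [mulVec, dotProduct, Pi.zero_apply, hentry, sum_sub_distrib, ← sum_div, ← mul_sum,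
    sum_margS hP1]
  rw [show ∑ s, P y s = margY P y from rfl, Real.div_sqrt, mul_one, sub_self]

theorem sqrt_margY_vecMul_chiSqMatrix (hP0 : ∀ y s, 0 ≤ P y s) (hP1 : ∑ y, ∑ s, P y s = 1) :
    (fun y => √(margY P y)) ᵥ* chiSqMatrix P = 0 := by
  funext s
  have hentry : ∀ y, √(margY P y) * chiSqMatrix P y s
      = P y s / √(margS P s) - margY P y * √(margS P s) := by
    intro y
    rcases eq_or_ne (margY P y) 0 with hq | hq
    · simp [chiSqMatrix, hq, eq_zero_of_margY_mul_margS_eq_zero hP0 (by rw [hq, zero_mul])]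
    · have hq' : 0 < margY P y := (sum_nonneg fun s _ => hP0 y s).lt_of_ne' hq
      rw [chiSqMatrix, mul_sub, mul_div_assoc',
        mul_div_mul_left _ _ (Real.sqrt_pos.mpr hq').ne', ← mul_assoc,
        Real.mul_self_sqrt hq'.le]
  simp only [vecMul, dotProduct, Pi.zero_apply, hentry, sum_sub_distrib, ← sum_div, ← sum_mul,
    sum_margY hP1]
  rw [show ∑ y, P y s = margS P s from rfl, Real.div_sqrt, one_mul, sub_self]

theorem rank_chiSqMatrix_lt (hP0 : ∀ y s, 0 ≤ P y s) (hP1 : ∑ y, ∑ s, P y s = 1) :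
    (chiSqMatrix P).rank < min (Fintype.card 𝒮) (Fintype.card 𝒴) := by
  refine lt_min (rank_lt_card_of_mulVec_eq_zero (sqrt_ne_zero_of_sum_eq_one (sum_margS hP1))
    (chiSqMatrix_mulVec_sqrt_margS hP0 hP1)) ?_
  rw [← rank_transpose]
  refine rank_lt_card_of_mulVec_eq_zero (sqrt_ne_zero_of_sum_eq_one (sum_margY hP1)) ?_
  rw [mulVec_transpose]
  exact sqrt_margY_vecMul_chiSqMatrix hP0 hP1

theorem maxCorr_ge_hfun_expected_tv_general
    (P : 𝒴 → 𝒮 → ℝ)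
    (hP0 : ∀ y s, 0 ≤ P y s)
    (hP1 : ∑ y, ∑ s, P y s = 1) :
    ((min (Fintype.card 𝒮) (Fintype.card 𝒴) : ℝ) - 1) * maxCorr P
      ≥ hfun (2 * ∑ s, margS P s * TV (condYS P s) (margY P)) := by
  have hρ0 : 0 ≤ maxCorr P := maxCorr_nonneg
  have hρ1 : maxCorr P ≤ 1 := maxCorr_le_one hP0
  have hrank : ((chiSqMatrix P).rank : ℝ) ≤ (min (Fintype.card 𝒮) (Fintype.card 𝒴) : ℝ) - 1 :=
    le_sub_iff_add_le.mpr (by exact_mod_cast rank_chiSqMatrix_lt hP0 hP1)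
  rw [two_mul_sum_margS_mul_TV hP0, ge_iff_le]
  calc _ ≤ (∑ y, ∑ s, |P y s - margY P y * margS P s|) ^ 2 := hfun_le_sq _
    _ ≤ ∑ y, ∑ s, chiSqMatrix P y s ^ 2 := sq_sum_sum_abs_sub_le_sum_sum_chiSqMatrix_sq hP0 hP1
    _ ≤ (chiSqMatrix P).rank * maxCorr P ^ 2 :=
        (chiSqMatrix P).sum_sq_le_rank_mul (sq_dotProduct_chiSqMatrix_mulVec_le hP0 hP1)
    _ ≤ (chiSqMatrix P).rank * maxCorr P := by gcongr; nlinarith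
    _ ≤ _ := by gcongr

/-- **Lemma 3.** For every pair of jointly distributed random variables `(Y, S)` on finite
sets with at least two elements each, with `r = min{|𝒮|, |𝒴|} - 1`,
`r ρ_m(Y, S) ≥ h(2 E_{s∼P_S}[TV(P_{Y|S=s}, P_Y)])`. -/
theorem maxCorr_ge_hfun_expected_tv
    (P : 𝒴 → 𝒮 → ℝ)
    (hP0 : ∀ y s, 0 ≤ P y s)
    (hP1 : ∑ y, ∑ s, P y s = 1)
    (hS : ∀ s, 0 < margS P s)
    (hcard𝒴 : 2 ≤ Fintype.card 𝒴)
    (hcard𝒮 : 2 ≤ Fintype.card 𝒮) :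
    ((min (Fintype.card 𝒮) (Fintype.card 𝒴) : ℝ) - 1) * maxCorr P
      ≥ hfun (2 * ∑ s, margS P s * TV (condYS P s) (margY P)) :=
  maxCorr_ge_hfun_expected_tv_general P hP0 hP1
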